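/- If R is a finite commutative ring and Γ_E(R) is a fan graph with at least four vertices, then R is a local ring. -/

import Mathlib

/-!
If `R` is not local, some `a` has `a` and `1 - a` both non-units, and a power of `a` is an
idempotent `e ≠ 0, 1`. The vertices `[e]` and `[1 - e]` are adjacent, so one of them, say `[e]`,
is the centre of the fan. Adjacency to the centre forces `e * x = 0` for every zero divisor `x`
outside `[e]`; applied also to `e + x`, this gives `ann x = ann (1 - e)`. So `Γ_E(R)` has only
the two vertices `[e]` and `[1 - e]`.
-/

open scoped Classical

noncomputable section

/-- The annihilator ideal of an element `x` of a commutative ring `R`. -/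
def ann (R : Type*) [CommRing R] (x : R) : Ideal R := Ideal.torsionOf R R x

/-- The type of nonzero zero divisors of `R`. -/
def ZD (R : Type*) [CommRing R] : Type _ :=
  {x : R // x ≠ 0 ∧ ∃ y : R, y ≠ 0 ∧ x * y = 0}

/-- Two zero divisors are equivalent iff they have the same annihilator. -/
instance annSetoid (R : Type*) [CommRing R] : Setoid (ZD R) :=
  ⟨fun a b => ann R a.1 = ann R b.1,
   fun _ => rfl, Eq.symm, Eq.trans⟩

/-- The vertex set of `Γ_E(R)`: equivalence classes of nonzero zero divisors. -/
def GammaEV (R : Type*) [CommRing R] : Type _ := Quotient (annSetoid R)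

/-- The class of a nonzero zero divisor. -/
def cls (R : Type*) [CommRing R] (a : ZD R) : GammaEV R :=
  Quotient.mk (annSetoid R) a

/-- The graph `Γ_E(R)` of equivalence classes of zero divisors. -/
def gammaE (R : Type*) [CommRing R] : SimpleGraph (GammaEV R) where
  Adj u v := u ≠ v ∧ ∃ a b : ZD R, cls R a = u ∧ cls R b = v ∧ a.1 * b.1 = 0
  symm := by
    constructor
    rintro u v ⟨huv, a, b, ha, hb, hab⟩
    exact ⟨huv.symm, b, a, hb, ha, by rwa [mul_comm] at hab⟩
  loopless := by constructor; rintro u ⟨h, -⟩; exact h rfl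

/-- `I` is a maximal element of the family `F = {ann x : 0 ≠ x ∈ R}`. -/
def MaxAnn (R : Type*) [CommRing R] (I : Ideal R) : Prop :=
  (∃ x : R, x ≠ 0 ∧ I = ann R x) ∧
    ∀ y : R, y ≠ 0 → I ≤ ann R y → I = ann R y

lemma exists_isIdempotentElem_pow {M : Type*} [Monoid M] [Finite M] (a : M) :
    ∃ n ≠ 0, IsIdempotentElem (a ^ n) := by
  obtain ⟨i, j, hne, hij⟩ := Finite.exists_ne_map_eq_of_infinite fun n : ℕ => a ^ (n + 1)
  wlog hlt : i < j generalizing i j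
  · exact this j i hne.symm hij.symm (by omega)
  obtain ⟨k, hk⟩ : ∃ k, j = i + (k + 1) := ⟨j - i - 1, by omega⟩
  set m := i + 1
  have hperiod : a ^ (m + (k + 1)) = a ^ m := by rw [hij]; congr 1; omega
  have hcycle : ∀ r t, a ^ (m + r + (k + 1) * t) = a ^ (m + r) := by
    intro r t
    induction t with
    | zero => simp
    | succ t ih =>
      rw [← ih, show m + r + (k + 1) * (t + 1) = m + (k + 1) + (r + (k + 1) * t) by ring,
        pow_add, hperiod, ← pow_add]
      congr 1; ring
  refine ⟨m * (k + 1), by positivity, ?_⟩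
  rw [IsIdempotentElem, ← pow_add]
  convert hcycle (m * k) m using 2 <;> ring

lemma exists_isIdempotentElem_ne_zero_ne_one_of_not_isLocalRing {R : Type*} [CommRing R]
    [Finite R] [Nontrivial R] (hR : ¬IsLocalRing R) :
    ∃ e : R, IsIdempotentElem e ∧ e ≠ 0 ∧ e ≠ 1 := by
  obtain ⟨a, ha, ha'⟩ : ∃ a : R, ¬IsUnit a ∧ ¬IsUnit (1 - a) := by
    by_contra! h
    exact hR (IsLocalRing.of_isUnit_or_isUnit_one_sub_self fun a => or_iff_not_imp_left.mpr (h a))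
  obtain ⟨n, hn, he⟩ := exists_isIdempotentElem_pow a
  exact ⟨a ^ n, he, fun h0 => ha' (IsNilpotent.isUnit_one_sub ⟨n, h0⟩),
    fun h1 => ha ((isUnit_pow_iff hn).mp (h1 ▸ isUnit_one))⟩

section ZeroDivisorGraph

variable {R : Type*} [CommRing R]

lemma isIdempotentElem_of_mul_eq_zero_of_add_eq_one {a b : R} (hmul : a * b = 0)
    (hadd : a + b = 1) : IsIdempotentElem a := by
  rw [IsIdempotentElem]
  linear_combination a * hadd - hmul

lemma mem_ann_iff {t x : R} : t ∈ ann R x ↔ t * x = 0 := by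
  simp [ann, Ideal.mem_torsionOf_iff, smul_eq_mul]

lemma cls_eq_cls_iff {a b : ZD R} : cls R a = cls R b ↔ ann R a.1 = ann R b.1 :=
  Quotient.eq

lemma gammaE_adj_cls_iff {a b : ZD R} :
    (gammaE R).Adj (cls R a) (cls R b) ↔ cls R a ≠ cls R b ∧ a.1 * b.1 = 0 := by
  refine ⟨fun ⟨hne, a', b', ha', hb', h⟩ => ⟨hne, ?_⟩,
    fun ⟨hne, h⟩ => ⟨hne, a, b, rfl, rfl, h⟩⟩
  have hb'a : b'.1 ∈ ann R a.1 := by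
    rw [← cls_eq_cls_iff.mp ha', mem_ann_iff, mul_comm, h]
  have hab : a.1 ∈ ann R b.1 := by
    rw [← cls_eq_cls_iff.mp hb', mem_ann_iff, mul_comm]
    exact mem_ann_iff.mp hb'a
  exact mem_ann_iff.mp hab

lemma ann_eq_or_eq_ann_one_sub {e : R} (he : IsIdempotentElem e) (he0 : e ≠ 0)
    (hkill : ∀ x : ZD R, ann R x.1 ≠ ann R e → e * x.1 = 0) (x : ZD R) :
    ann R x.1 = ann R e ∨ ann R x.1 = ann R (1 - e) := by
  refine or_iff_not_imp_left.mpr fun hx => ?_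
  have hee : e * e = e := he
  have hex : e * x.1 = 0 := hkill x hx
  ext t
  simp only [mem_ann_iff]
  refine ⟨fun ht => ?_, fun ht => by linear_combination x.1 * ht + t * hex⟩
  by_contra hs
  -- `e + x` is a zero divisor, killed by `t * (1 - e)`, whose annihilator differs from `ann e`
  have hw0 : e + x.1 ≠ 0 := fun h => he0 (by linear_combination -hee + e * h - hex)
  have hws : (e + x.1) * (t * (1 - e)) = 0 := by linear_combination (1 - e) * ht - t * hee
  have hw : ann R (e + x.1) ≠ ann R e := by
    intro h
    have h1 : 1 - e ∈ ann R (e + x.1) := h ▸ mem_ann_iff.mpr (by linear_combination -hee)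
    exact x.2.1 (by linear_combination mem_ann_iff.mp h1 + hee + hex)
  exact he0 (by linear_combination hkill ⟨e + x.1, hw0, _, hs, hws⟩ hw - hee - hex)

lemma eq_cls_or_eq_cls_of_forall_adj {E E' : ZD R} (hmul : E.1 * E'.1 = 0) (hadd : E.1 + E'.1 = 1)
    (hcenter : ∀ v, v ≠ cls R E → (gammaE R).Adj (cls R E) v) (v : GammaEV R) :
    v = cls R E ∨ v = cls R E' := by
  obtain ⟨x, rfl⟩ := Quotient.mk_surjective v
  have hE' : E'.1 = 1 - E.1 := eq_sub_of_add_eq' hadd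
  have he := isIdempotentElem_of_mul_eq_zero_of_add_eq_one hmul hadd
  have hkill (y : ZD R) (hy : ann R y.1 ≠ ann R E.1) : E.1 * y.1 = 0 :=
    (gammaE_adj_cls_iff.mp (hcenter _ fun h => hy (cls_eq_cls_iff.mp h))).2
  rcases ann_eq_or_eq_ann_one_sub he E.2.1 hkill x with h | h
  · exact .inl (cls_eq_cls_iff.mpr h)
  · exact .inr (cls_eq_cls_iff.mpr (hE' ▸ h))

lemma cls_ne_cls_of_mul_eq_zero_of_add_eq_one {E E' : ZD R} (hmul : E.1 * E'.1 = 0)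
    (hadd : E.1 + E'.1 = 1) : cls R E ≠ cls R E' := by
  intro h
  have hE : E.1 ∈ ann R E.1 := (cls_eq_cls_iff.mp h).symm ▸ mem_ann_iff.mpr hmul
  rw [mem_ann_iff, (isIdempotentElem_of_mul_eq_zero_of_add_eq_one hmul hadd).eq] at hE
  exact E.2.1 hE

end ZeroDivisorGraph

theorem stmt12 (R : Type*) [CommRing R] [Finite R]
    (hcard : 4 ≤ (Set.univ : Set (GammaEV R)).encard)
    (c : GammaEV R)
    (hcenter : ∀ v : GammaEV R, v ≠ c → (gammaE R).Adj c v)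
    (hindep : ∀ u v : GammaEV R, u ≠ c → v ≠ c → ¬ (gammaE R).Adj u v) :
    IsLocalRing R := by
  obtain ⟨⟨x, hx0, -⟩⟩ : Nonempty (ZD R) := by
    by_contra! h
    have : IsEmpty (GammaEV R) := Quot.instIsEmpty
    simp [Set.univ_eq_empty_iff.mpr this] at hcard
  have : Nontrivial R := ⟨⟨x, 0, hx0⟩⟩
  by_contra hR
  obtain ⟨e, he, he0, he1⟩ := exists_isIdempotentElem_ne_zero_ne_one_of_not_isLocalRing hR
  have he1' : 1 - e ≠ 0 := sub_ne_zero.mpr he1.symm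
  let E : ZD R := ⟨e, he0, 1 - e, he1', he.mul_one_sub_self⟩
  let E' : ZD R := ⟨1 - e, he1', e, he0, he.one_sub_mul_self⟩
  have hEE' : cls R E ≠ cls R E' :=
    cls_ne_cls_of_mul_eq_zero_of_add_eq_one he.mul_one_sub_self (add_sub_cancel e 1)
  have hc : c = cls R E ∨ c = cls R E' := by
    by_contra! h
    exact hindep _ _ (Ne.symm h.1) (Ne.symm h.2)
      (gammaE_adj_cls_iff.mpr ⟨hEE', he.mul_one_sub_self⟩)
  have hall (v : GammaEV R) : v = cls R E ∨ v = cls R E' := by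
    rcases hc with rfl | rfl
    · exact eq_cls_or_eq_cls_of_forall_adj he.mul_one_sub_self (add_sub_cancel e 1) hcenter v
    · exact (eq_cls_or_eq_cls_of_forall_adj he.one_sub_mul_self (sub_add_cancel 1 e)
        hcenter v).symm
  have hle : (Set.univ : Set (GammaEV R)).encard ≤ 2 :=
    (Set.encard_le_encard fun v _ => hall v).trans (Set.encard_pair hEE').le
  exact absurd (hcard.trans hle) (by norm_num)
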